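/- arXiv:1403.6573 — 4 statements merged into one kernel-verified Lean document; each statement's English description precedes it below -/
import Mathlib

section
/- Let K be a finite index set, for each k let ι k be a finite type, and let A k : Matrix (ι k) (ι k) ℝ be a family of positive semidefinite matrices. Then for every σ : ℝ with σ ≠ 0, the matrix (⊗ₖ A k) + σ² • 1 is positive definite; in particular it is invertible. -/
/-! Entry `(i, j)` of `⊗ₖ A k` is the product over `k` of the entries of the pulled-back
matrices `(A k).submatrix (· k) (· k)`, so `⊗ₖ A k` is their Hadamard product; the Schur
product theorem makes it positive semidefinite, and adding `σ² • 1` with `σ² > 0` makes it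
positive definite. -/

open Matrix

/-- The Kronecker-type product of a finite family of square matrices:
the matrix indexed by `Π k, ι k` whose `(i, j)` entry is `∏ k, A k (i k) (j k)`. -/
noncomputable def kronPi {K : Type*} [Fintype K] [DecidableEq K]
    {ι : K → Type*} [∀ k, Fintype (ι k)]
    (A : ∀ k, Matrix (ι k) (ι k) ℝ) : Matrix (∀ k, ι k) (∀ k, ι k) ℝ :=
  Matrix.of fun i j => ∏ k, A k (i k) (j k)

open scoped ComplexOrder

namespace Matrix

variable {𝕜 n K : Type*} [RCLike 𝕜] [Finite n]

theorem posSemidef_of_const_one : (of fun _ _ => 1 : Matrix n n 𝕜).PosSemidef := by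
  simpa [vecMulVec] using posSemidef_vecMulVec_self_star (1 : n → 𝕜)

theorem posSemidef_of_finset_prod {s : Finset K} {B : K → Matrix n n 𝕜}
    (hB : ∀ k ∈ s, (B k).PosSemidef) : (of fun i j => ∏ k ∈ s, B k i j).PosSemidef := by
  classical
  induction s using Finset.induction_on with
  | empty => simpa using posSemidef_of_const_one
  | insert a s ha ih =>
    have hprod : (of fun i j => ∏ k ∈ insert a s, B k i j) =
        B a ⊙ of fun i j => ∏ k ∈ s, B k i j := by
      ext i j
      simp [Finset.prod_insert ha]
    rw [hprod]
    exact (hB a (s.mem_insert_self a)).hadamard (ih fun k hk => hB k (Finset.mem_insert_of_mem hk))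

end Matrix

theorem kronPi_posSemidef {K : Type*} [Fintype K] [DecidableEq K]
    {ι : K → Type*} [∀ k, Fintype (ι k)] {A : ∀ k, Matrix (ι k) (ι k) ℝ}
    (hA : ∀ k, (A k).PosSemidef) : (kronPi A).PosSemidef :=
  posSemidef_of_finset_prod (s := Finset.univ)
    (B := fun k => (A k).submatrix (fun i : ∀ k, ι k => i k) (fun i => i k))
    fun k _ => (hA k).submatrix _

/-- If the `A k` are positive semidefinite and `σ ≠ 0`, then `(⊗ₖ A k) + σ² • 1` is
positive definite; in particular it is invertible. -/
theorem kronPi_add_noise_posDef {K : Type*} [Fintype K] [DecidableEq K]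
    {ι : K → Type*} [∀ k, Fintype (ι k)] [∀ k, DecidableEq (ι k)]
    (A : ∀ k, Matrix (ι k) (ι k) ℝ) (hA : ∀ k, (A k).PosSemidef)
    (σ : ℝ) (hσ : σ ≠ 0) :
    (kronPi A + σ ^ 2 • 1).PosDef ∧ IsUnit (kronPi A + σ ^ 2 • 1).det := by
  have hpos : (kronPi A + σ ^ 2 • 1).PosDef :=
    PosDef.posSemidef_add (kronPi_posSemidef hA) (PosDef.one.smul (by positivity))
  exact ⟨hpos, (isUnit_iff_isUnit_det _).mp hpos.isUnit⟩
end

section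
/- Let K be a finite index set, for each k let ι k be a finite type, and for each k let A k : Matrix (ι k) (ι k) ℝ be positive semidefinite with A k = U k * D k * (U k)ᵀ, where each U k is orthogonal and each D k is diagonal with nonnegative diagonal entries. Then for every σ : ℝ with σ ≠ 0, ((⊗ₖ A k) + σ² • 1)⁻¹ = (⊗ₖ U k) * ((⊗ₖ D k) + σ² • 1)⁻¹ * (⊗ₖ U k)ᵀ, and ((⊗ₖ D k) + σ² • 1)⁻¹ is the diagonal matrix with diagonal entries ((∏ k, D k (i k) (i k)) + σ²)⁻¹. -/
open Matrix

lemma kronPi_mul {K : Type*} [Fintype K] [DecidableEq K]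
    {ι : K → Type*} [∀ k, Fintype (ι k)] [∀ k, DecidableEq (ι k)]
    (A B : ∀ k, Matrix (ι k) (ι k) ℝ) :
    kronPi A * kronPi B = kronPi (fun k => A k * B k) := by
  ext i j
  simp only [kronPi, Matrix.mul_apply, Matrix.of_apply]
  rw [Finset.prod_congr rfl (fun k _ => rfl)]
  have := Finset.prod_univ_sum (fun _ : K => (Finset.univ : Finset _))
    (fun k (m : ι k) => A k (i k) m * B k m (j k))
  rw [this, Fintype.piFinset_univ]
  exact Finset.sum_congr rfl fun x _ => (Finset.prod_mul_distrib).symm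

lemma kronPi_transpose {K : Type*} [Fintype K] [DecidableEq K]
    {ι : K → Type*} [∀ k, Fintype (ι k)]
    (A : ∀ k, Matrix (ι k) (ι k) ℝ) :
    (kronPi A)ᵀ = kronPi (fun k => (A k)ᵀ) := rfl

/-- Exact inverse of the noisy covariance matrix via factor-wise eigendecompositions:
`((⊗ₖ A k) + σ² • 1)⁻¹ = (⊗ₖ U k) * ((⊗ₖ D k) + σ² • 1)⁻¹ * (⊗ₖ U k)ᵀ`, and
`((⊗ₖ D k) + σ² • 1)⁻¹` is diagonal with entries `((∏ k, D k (i k) (i k)) + σ²)⁻¹`. -/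
theorem kronPi_add_noise_inv {K : Type*} [Fintype K] [DecidableEq K]
    {ι : K → Type*} [∀ k, Fintype (ι k)] [∀ k, DecidableEq (ι k)]
    (A U D : ∀ k, Matrix (ι k) (ι k) ℝ)
    (hA : ∀ k, (A k).PosSemidef)
    (hU : ∀ k, U k * (U k)ᵀ = 1)
    (hD : ∀ k, (D k).IsDiag)
    (hDnonneg : ∀ k, ∀ i : ι k, 0 ≤ D k i i)
    (hAUD : ∀ k, A k = U k * D k * (U k)ᵀ)
    (σ : ℝ) (hσ : σ ≠ 0) :
    (kronPi A + σ ^ 2 • 1)⁻¹ = kronPi U * (kronPi D + σ ^ 2 • 1)⁻¹ * (kronPi U)ᵀ ∧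
      (kronPi D + σ ^ 2 • 1)⁻¹ =
        Matrix.diagonal (fun i : ∀ k, ι k => ((∏ k, D k (i k) (i k)) + σ ^ 2)⁻¹) := by
  set V := kronPi U with hV
  have hVVT : V * Vᵀ = 1 := by
    rw [hV, kronPi_transpose, kronPi_mul]
    ext i j
    simp only [kronPi, Matrix.of_apply]
    by_cases h : i = j
    · subst h
      simp [hU, Matrix.one_apply]
    · obtain ⟨k, hk⟩ := Function.ne_iff.mp h
      rw [Matrix.one_apply_ne h]
      exact Finset.prod_eq_zero (Finset.mem_univ k) (by simp [hU, Matrix.one_apply_ne hk])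
  have hVinv : V⁻¹ = Vᵀ := Matrix.inv_eq_right_inv hVVT
  have hVTinv : (Vᵀ)⁻¹ = V :=
    Matrix.inv_eq_right_inv (mul_eq_one_comm.mp hVVT)
  -- kronPi D is diagonal
  have hkD : kronPi D = Matrix.diagonal (fun i : ∀ k, ι k => ∏ k, D k (i k) (i k)) := by
    ext i j
    by_cases h : i = j
    · subst h; simp [kronPi]
    · obtain ⟨k, hk⟩ := Function.ne_iff.mp h
      rw [Matrix.diagonal_apply_ne _ h]
      exact Finset.prod_eq_zero (Finset.mem_univ k) ((hD k) hk)
  have hM : kronPi D + σ ^ 2 • 1 =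
      Matrix.diagonal (fun i : ∀ k, ι k => (∏ k, D k (i k) (i k)) + σ ^ 2) := by
    rw [hkD]
    ext i j
    by_cases h : i = j
    · subst h; simp
    · simp [Matrix.diagonal_apply_ne _ h, Matrix.one_apply_ne h]
  have hpos : ∀ i : ∀ k, ι k, (∏ k, D k (i k) (i k)) + σ ^ 2 ≠ 0 := fun i => by
    have h1 : 0 ≤ ∏ k, D k (i k) (i k) :=
      Finset.prod_nonneg fun k _ => hDnonneg k (i k)
    have h2 : 0 < σ ^ 2 := by positivity
    linarith
  have hMinv : (kronPi D + σ ^ 2 • 1)⁻¹ =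
      Matrix.diagonal (fun i : ∀ k, ι k => ((∏ k, D k (i k) (i k)) + σ ^ 2)⁻¹) := by
    rw [hM]
    refine Matrix.inv_eq_right_inv ?_
    rw [Matrix.diagonal_mul_diagonal]
    ext i j
    by_cases h : i = j
    · subst h; simp [mul_inv_cancel₀ (hpos i)]
    · simp [Matrix.diagonal_apply_ne _ h, Matrix.one_apply_ne h]
  refine ⟨?_, hMinv⟩
  have hkA : kronPi A = V * kronPi D * Vᵀ := by
    rw [show A = fun k => U k * D k * (U k)ᵀ from funext hAUD, hV, kronPi_transpose,
      kronPi_mul, kronPi_mul]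
  have key : kronPi A + σ ^ 2 • 1 = V * (kronPi D + σ ^ 2 • 1) * Vᵀ := by
    rw [hkA, Matrix.mul_add, Matrix.add_mul, Matrix.mul_smul, Matrix.smul_mul,
      Matrix.mul_one, hVVT]
  rw [key, Matrix.mul_inv_rev, Matrix.mul_inv_rev, hVinv, hVTinv]
  rw [Matrix.mul_assoc]
end

section
/- Let d be a natural number, N a finite type, x : N → (Fin d → ℝ) a family of points, θ : Fin d → ℝ a vector of inverse length-scales, and σ_f : ℝ. Then the squared exponential kernel matrix M : Matrix N N ℝ defined by M p q = σ_f² * Real.exp (−∑ i, θ i ^ 2 * (x p i − x q i) ^ 2) is positive semidefinite. -/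
/-!
With `a p = (θ i * x p i)ᵢ`, the kernel entry is
`σ_f² · e^{-|a p|²} · e^{2⟪a p, a q⟫} · e^{-|a q|²}`, a diagonal congruence of the entrywise
exponential of the Gram matrix `2⟪a p, a q⟫`. The entrywise exponential of a positive semidefinite
matrix `A` is `∑ₖ A^{⊙k} / k!`; each Hadamard power is positive semidefinite by the Schur product
theorem, and positive semidefiniteness passes to limits of series.
-/

open Matrix

namespace Matrix

open scoped ComplexOrder

variable {n 𝕜 : Type*} [Fintype n] [RCLike 𝕜]

theorem PosSemidef.of_hasSum {ι : Type*} {f : ι → Matrix n n 𝕜} {A : Matrix n n 𝕜}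
    (hf : HasSum f A) (hpos : ∀ k, (f k).PosSemidef) : A.PosSemidef := by
  rw [posSemidef_iff_dotProduct_mulVec]
  refine ⟨?_, fun z => ?_⟩
  · have hH : HasSum f Aᴴ := by
      simpa only [fun k => (hpos k).isHermitian.eq] using hf.matrix_conjTranspose
    exact hf.unique hH |>.symm
  · let q : Matrix n n 𝕜 →+ 𝕜 :=
      { toFun := fun M => star z ⬝ᵥ M *ᵥ z
        map_zero' := by simp
        map_add' := fun M N => by simp only [add_mulVec, dotProduct_add] }
    have hq : Continuous q :=
      continuous_const.dotProduct (continuous_id.matrix_mulVec continuous_const)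
    exact (hf.map q hq).nonneg fun k => (hpos k).dotProduct_mulVec_nonneg z

theorem PosSemidef.map_pow {A : Matrix n n 𝕜} (hA : A.PosSemidef) (k : ℕ) :
    (A.map (· ^ k)).PosSemidef := by
  induction k with
  | zero =>
    have h : A.map (· ^ 0) = vecMulVec 1 (star 1) := by ext; simp [vecMulVec]
    exact h ▸ posSemidef_vecMulVec_self_star 1
  | succ k ih =>
    have h : A.map (· ^ (k + 1)) = A.map (· ^ k) ⊙ A := by ext; simp [pow_succ]
    exact h ▸ ih.hadamard hA

theorem PosSemidef.map_exp {A : Matrix n n ℝ} (hA : A.PosSemidef) :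
    (A.map Real.exp).PosSemidef := by
  refine .of_hasSum (f := fun k => (k.factorial⁻¹ : ℝ) • A.map (· ^ k)) ?_
    fun k => (hA.map_pow k).smul (by positivity)
  refine Pi.hasSum.2 fun p => Pi.hasSum.2 fun q => ?_
  simpa [Real.exp_eq_exp_ℝ, div_eq_inv_mul] using NormedSpace.expSeries_div_hasSum_exp (A p q)

theorem posSemidef_gaussianKernel {ι : Type*} [Fintype ι] (u : n → ι → ℝ) :
    (of fun p q => Real.exp (-∑ i, (u p i - u q i) ^ 2)).PosSemidef := by
  classical
  let D : Matrix n n ℝ := diagonal fun p => Real.exp (-(u p ⬝ᵥ u p))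
  have hG : (2 • (of u * (of u)ᴴ)).PosSemidef :=
    (posSemidef_self_mul_conjTranspose _).smul zero_le_two
  have hfactor : of (fun p q => Real.exp (-∑ i, (u p i - u q i) ^ 2)) =
      D * (2 • (of u * (of u)ᴴ)).map Real.exp * Dᴴ := by
    ext p q
    rw [diagonal_conjTranspose, mul_diagonal, diagonal_mul]
    simp only [map_apply, smul_apply, mul_apply, conjTranspose_apply, of_apply, star_trivial,
      Pi.star_apply, ← Real.exp_add, dotProduct]
    congr 1
    simp only [sub_sq, Finset.sum_add_distrib, Finset.sum_sub_distrib, nsmul_eq_mul,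
      Finset.mul_sum]
    ring_nf
  exact hfactor ▸ hG.map_exp.mul_mul_conjTranspose_same D

end Matrix

/-- The squared exponential kernel matrix
`M p q = σ_f² * exp(−∑ i, θ i² (x p i − x q i)²)` is positive semidefinite. -/
theorem squaredExponential_posSemidef (d : ℕ) {N : Type*} [Fintype N]
    (x : N → Fin d → ℝ) (θ : Fin d → ℝ) (σf : ℝ) :
    Matrix.PosSemidef (Matrix.of fun p q : N =>
      σf ^ 2 * Real.exp (-∑ i, θ i ^ 2 * (x p i - x q i) ^ 2)) := by
  have h : (of fun p q : N => σf ^ 2 * Real.exp (-∑ i, θ i ^ 2 * (x p i - x q i) ^ 2)) =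
      σf ^ 2 • of fun p q => Real.exp (-∑ i, (θ i * x p i - θ i * x q i) ^ 2) := by
    ext p q
    simp only [of_apply, Matrix.smul_apply, smul_eq_mul, ← mul_sub, mul_pow]
  exact h ▸ (posSemidef_gaussianKernel fun p i => θ i * x p i).smul (sq_nonneg σf)
end

section
/- Let m and n be finite types and A : Matrix m m ℝ, B : Matrix n n ℝ be positive semidefinite matrices. Then for every σ : ℝ with σ ≠ 0 and every vector y : m × n → ℝ, the linear system (Matrix.kroneckerMap (*) A B + σ² • 1).mulVec z = y has a unique solution z, and if A = U₁ * D₁ * U₁ᵀ and B = U₂ * D₂ * U₂ᵀ with U₁, U₂ orthogonal and D₁, D₂ diagonal with nonnegative entries, this solution is z = (Matrix.kroneckerMap (*) U₁ U₂).mulVec (w) where w (i,j) = ((D₁ i i) * (D₂ j j) + σ²)⁻¹ * ((Matrix.kroneckerMap (*) U₁ᵀ U₂ᵀ).mulVec y) (i,j). -/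
/-!
The matrix `A ⊗ₖ B + σ² • 1` is positive definite, being a positive semidefinite Kronecker
product plus a positive multiple of the identity, so the system has exactly one solution.
By the mixed-product rule, `A = U₁ D₁ U₁ᵀ` and `B = U₂ D₂ U₂ᵀ` give
`A ⊗ₖ B + σ² • 1 = (U₁ ⊗ₖ U₂) (D₁ ⊗ₖ D₂ + σ² • 1) (U₁ ⊗ₖ U₂)ᵀ`, where `U₁ ⊗ₖ U₂` is orthogonal
and the middle factor is diagonal with nonzero entries `D₁ i i * D₂ j j + σ²`; inverting it is
a componentwise division.
-/

open Matrix
open scoped Kronecker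

section Field

variable {K ι : Type*} [Field K] [Fintype ι] [DecidableEq ι]

theorem Matrix.mul_diagonal_mul_mulVec_eq_of_mul_eq_one {U V : Matrix ι ι K} (hVU : V * U = 1)
    {d : ι → K} (hd : ∀ i, d i ≠ 0) (y : ι → K) :
    (U * diagonal d * V) *ᵥ (U *ᵥ fun i => (d i)⁻¹ * (V *ᵥ y) i) = y := by
  have hUV : U * V = 1 := mul_eq_one_comm.mp hVU
  have hdiv : diagonal d *ᵥ (fun i => (d i)⁻¹ * (V *ᵥ y) i) = V *ᵥ y := by
    ext i
    rw [mulVec_diagonal, mul_inv_cancel_left₀ (hd i)]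
  calc (U * diagonal d * V) *ᵥ (U *ᵥ fun i => (d i)⁻¹ * (V *ᵥ y) i)
      = U *ᵥ (diagonal d *ᵥ fun i => (d i)⁻¹ * (V *ᵥ y) i) := by
        rw [mulVec_mulVec, Matrix.mul_assoc, hVU, Matrix.mul_one, mulVec_mulVec]
    _ = y := by rw [hdiv, mulVec_mulVec, hUV, one_mulVec]

end Field

section CommRing

variable {R m n : Type*} [CommRing R] [DecidableEq m] [DecidableEq n]

theorem Matrix.mul_mul_add_smul_one [Fintype m] {U V : Matrix m m R} (hUV : U * V = 1)
    (M : Matrix m m R) (c : R) : U * M * V + c • 1 = U * (M + c • 1) * V := by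
  rw [Matrix.mul_add, Matrix.add_mul, Matrix.mul_smul, Matrix.mul_one, Matrix.smul_mul, hUV]

theorem Matrix.IsDiag.kronecker_add_smul_one {D₁ : Matrix m m R} {D₂ : Matrix n n R}
    (hD₁ : D₁.IsDiag) (hD₂ : D₂.IsDiag) (c : R) :
    D₁ ⊗ₖ D₂ + c • 1 = diagonal fun p => D₁ p.1 p.1 * D₂ p.2 p.2 + c := by
  conv_lhs => rw [← hD₁.diagonal_diag, ← hD₂.diagonal_diag, diagonal_kronecker_diagonal,
    ← diagonal_one, ← diagonal_smul, diagonal_add]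
  simp only [diag, Pi.smul_apply, smul_eq_mul, mul_one]

theorem Matrix.kronecker_transpose_mul_kronecker [Fintype m] [Fintype n] {U₁ : Matrix m m R}
    {U₂ : Matrix n n R} (h₁ : U₁ * U₁ᵀ = 1) (h₂ : U₂ * U₂ᵀ = 1) :
    (U₁ᵀ ⊗ₖ U₂ᵀ) * (U₁ ⊗ₖ U₂) = 1 := by
  rw [← mul_kronecker_mul, mul_eq_one_comm.mp h₁, mul_eq_one_comm.mp h₂, one_kronecker_one]

end CommRing

theorem Matrix.kronecker_spectral_add_smul_one_mulVec_eq {K m n : Type*} [Field K]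
    [Fintype m] [Fintype n] [DecidableEq m] [DecidableEq n]
    {U₁ D₁ : Matrix m m K} {U₂ D₂ : Matrix n n K} (h₁ : U₁ * U₁ᵀ = 1) (h₂ : U₂ * U₂ᵀ = 1)
    (hD₁ : D₁.IsDiag) (hD₂ : D₂.IsDiag) {c : K} (hc : ∀ i j, D₁ i i * D₂ j j + c ≠ 0)
    (y : m × n → K) :
    ((U₁ * D₁ * U₁ᵀ) ⊗ₖ (U₂ * D₂ * U₂ᵀ) + c • 1) *ᵥ ((U₁ ⊗ₖ U₂) *ᵥ
      fun p => (D₁ p.1 p.1 * D₂ p.2 p.2 + c)⁻¹ * ((U₁ᵀ ⊗ₖ U₂ᵀ) *ᵥ y) p) = y := by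
  have hVU := kronecker_transpose_mul_kronecker h₁ h₂
  rw [mul_kronecker_mul, mul_kronecker_mul, mul_mul_add_smul_one (mul_eq_one_comm.mp hVU),
    hD₁.kronecker_add_smul_one hD₂]
  exact mul_diagonal_mul_mulVec_eq_of_mul_eq_one hVU (fun p => hc p.1 p.2) y

/-- Closed-form solution of the Kronecker-structured noisy linear system
`(A ⊗ₖ B + σ² • 1) z = y`: the system has a unique solution, and if `A = U₁ D₁ U₁ᵀ`
and `B = U₂ D₂ U₂ᵀ` with `U₁, U₂` orthogonal and `D₁, D₂` diagonal with nonnegative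
entries, the solution is
`z = (U₁ ⊗ₖ U₂) w` with `w (i,j) = (D₁ i i * D₂ j j + σ²)⁻¹ * ((U₁ᵀ ⊗ₖ U₂ᵀ) y) (i,j)`. -/
theorem kronecker_noisy_system_solution {m n : Type*} [Fintype m] [Fintype n]
    [DecidableEq m] [DecidableEq n]
    (A : Matrix m m ℝ) (B : Matrix n n ℝ)
    (hA : A.PosSemidef) (hB : B.PosSemidef)
    (σ : ℝ) (hσ : σ ≠ 0) (y : m × n → ℝ) :
    (∃! z : m × n → ℝ,
        (Matrix.kroneckerMap (· * ·) A B + σ ^ 2 • 1).mulVec z = y) ∧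
      ∀ (U₁ D₁ : Matrix m m ℝ) (U₂ D₂ : Matrix n n ℝ),
        U₁ * U₁ᵀ = 1 → U₂ * U₂ᵀ = 1 →
        D₁.IsDiag → D₂.IsDiag →
        (∀ i, 0 ≤ D₁ i i) → (∀ j, 0 ≤ D₂ j j) →
        A = U₁ * D₁ * U₁ᵀ → B = U₂ * D₂ * U₂ᵀ →
        (Matrix.kroneckerMap (· * ·) A B + σ ^ 2 • 1).mulVec
          ((Matrix.kroneckerMap (· * ·) U₁ U₂).mulVec
            (fun p : m × n => (D₁ p.1 p.1 * D₂ p.2 p.2 + σ ^ 2)⁻¹ *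
              (Matrix.kroneckerMap (· * ·) U₁ᵀ U₂ᵀ).mulVec y p)) = y := by
  have hσ2 : 0 < σ ^ 2 := by positivity
  have hPD : (A ⊗ₖ B + σ ^ 2 • 1).PosDef :=
    PosDef.posSemidef_add (hA.kronecker hB) (PosDef.one.smul hσ2)
  refine ⟨?_, ?_⟩
  · exact (Function.Bijective.existsUnique
      ⟨mulVec_injective_iff_isUnit.mpr hPD.isUnit, mulVec_surjective_iff_isUnit.mpr hPD.isUnit⟩ y)
  · rintro U₁ D₁ U₂ D₂ h₁ h₂ hD₁ hD₂ hD₁_nonneg hD₂_nonneg rfl rfl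
    exact kronecker_spectral_add_smul_one_mulVec_eq h₁ h₂ hD₁ hD₂
      (fun i j => (add_pos_of_nonneg_of_pos (mul_nonneg (hD₁_nonneg i) (hD₂_nonneg j)) hσ2).ne') y
end
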